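/- arXiv:2011.02039 — 2 statements merged into one kernel-verified Lean document; each statement's English description precedes it below -/
import Mathlib

section
/- If the sequence (u_n) contains no zero terms but contains at least one negative term, then f is nowhere monotonic on [0, 1]: there is no non-degenerate subinterval of [0, 1] on which f is monotone (non-decreasing or non-increasing). -/
/-! Keep the first `n` Engel digits `d` of the midpoint of `(a, b)`, put `m` in position `n` and
zeros after it. For large `n` these points `x m` lie in `(a, b)` and decrease in `m`. A zero tail
contributes `r 0 / (1 - u 0) = 1` to the series, so `f (x m) - f (x (m + 1)) = P * u m` with
`P = u (d 0) ⋯ u (d (n - 1)) ≠ 0`. Since `u 0 = 1 - r 0 > 0` and some `u N < 0`, these increments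
take both signs. -/

open scoped BigOperators

/-- The value `Δ^E_g` of the Engel series with digit sequence `g`
(`g n` is the paper's `g_{n+1}`). -/
noncomputable def engelSum (g : ℕ → ℕ) : ℝ :=
  ∑' n : ℕ, ∏ k ∈ Finset.range (n + 1),
    ((2 : ℝ) + ∑ i ∈ Finset.range (k + 1), (g i : ℝ))⁻¹

/-- The value of the series `r_{g_1} + ∑_{k≥2} r_{g_k} ∏_{i=1}^{k-1} u_{g_i}`
defining `f` on the digit sequence `g`. -/
noncomputable def fSeries (u r : ℕ → ℝ) (g : ℕ → ℕ) : ℝ :=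
  r (g 0) + ∑' k : ℕ, r (g (k + 1)) * ∏ i ∈ Finset.range (k + 1), u (g i)

/-- `rpred r n = r (n-1)`, with the convention `r (-1) = 1`. -/
noncomputable def rpred (r : ℕ → ℝ) (n : ℕ) : ℝ := if n = 0 then 1 else r (n - 1)

open Finset

def spliceDigits (d : ℕ → ℕ) (n m : ℕ) : ℕ → ℕ :=
  fun i => if i < n then d i else if i = n then m else 0

section spliceDigits

variable (d : ℕ → ℕ) {n m i : ℕ}

lemma spliceDigits_of_lt (hi : i < n) : spliceDigits d n m i = d i := if_pos hi

@[simp]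
lemma spliceDigits_self : spliceDigits d n m n = m := by simp [spliceDigits]

lemma spliceDigits_of_gt (hi : n < i) : spliceDigits d n m i = 0 := by
  rw [spliceDigits, if_neg (by omega), if_neg (by omega)]

variable {M : Type*} [CommMonoid M] (φ : ℕ → M) {k : ℕ}

@[to_additive]
lemma prod_range_spliceDigits_of_le (hk : k ≤ n) :
    ∏ i ∈ range k, φ (spliceDigits d n m i) = ∏ i ∈ range k, φ (d i) :=
  prod_congr rfl fun i hi => by rw [spliceDigits_of_lt d (by rw [mem_range] at hi; omega)]

@[to_additive]
lemma prod_range_spliceDigits_add (t : ℕ) :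
    ∏ i ∈ range (n + 1 + t), φ (spliceDigits d n m i)
      = (∏ i ∈ range n, φ (d i)) * φ m * φ 0 ^ t := by
  have htail : ∀ j ∈ range t, φ (spliceDigits d n m (n + 1 + j)) = φ 0 := fun j _ => by
    rw [spliceDigits_of_gt d (by omega)]
  rw [prod_range_add, prod_range_succ, prod_range_spliceDigits_of_le d φ le_rfl,
    prod_congr rfl htail, prod_const, card_range, spliceDigits_self]

end spliceDigits

/-- Partial products of the inverse Engel denominators: `engelSum g = ∑' n, engelProd g (n + 1)`
holds definitionally. -/
noncomputable def engelProd (g : ℕ → ℕ) (n : ℕ) : ℝ :=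
  ∏ k ∈ range n, ((2 : ℝ) + ∑ i ∈ range (k + 1), (g i : ℝ))⁻¹

section engelProd

variable (g : ℕ → ℕ) (n : ℕ)

lemma engelProd_pos : 0 < engelProd g n :=
  prod_pos fun _ _ => by positivity

lemma engelProd_le_half_pow : engelProd g n ≤ (1 / 2) ^ n := by
  calc engelProd g n ≤ ∏ _k ∈ range n, (1 / 2 : ℝ) :=
        prod_le_prod (fun _ _ => by positivity) fun k _ => by
          rw [one_div]
          exact inv_anti₀ two_pos (le_add_of_nonneg_right (sum_nonneg fun _ _ => by positivity))
    _ = (1 / 2) ^ n := by rw [prod_const, card_range]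

lemma summable_engelProd_succ : Summable fun j => engelProd g (j + 1) :=
  (summable_geometric_two' 1).of_nonneg_of_le (fun j => (engelProd_pos g _).le) fun j =>
    (engelProd_le_half_pow g (j + 1)).trans_eq (by rw [one_div_pow, pow_succ', div_div])

lemma engelSum_eq_sum_add_tsum :
    engelSum g = ∑ j ∈ range n, engelProd g (j + 1) + ∑' t, engelProd g (t + n + 1) :=
  ((summable_engelProd_succ g).sum_add_tsum_nat_add n).symm

lemma tsum_engelProd_tail_pos : 0 < ∑' t, engelProd g (t + n + 1) :=
  ((summable_nat_add_iff n).mpr (summable_engelProd_succ g)).tsum_pos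
    (fun _ => (engelProd_pos g _).le) 0 (engelProd_pos g _)

lemma tsum_engelProd_tail_le : ∑' t, engelProd g (t + n + 1) ≤ (1 / 2) ^ n := by
  have hgeom : ∀ t, (1 / 2 : ℝ) ^ (t + n + 1) = (1 / 2) ^ n / 2 / 2 ^ t := fun t => by
    rw [one_div_pow, one_div_pow, div_div, div_div]; ring
  calc ∑' t, engelProd g (t + n + 1) ≤ ∑' t : ℕ, (1 / 2 : ℝ) ^ n / 2 / 2 ^ t :=
        ((summable_nat_add_iff n).mpr (summable_engelProd_succ g)).tsum_le_tsum
          (fun t => hgeom t ▸ engelProd_le_half_pow g _) (summable_geometric_two' _)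
    _ = (1 / 2) ^ n := tsum_geometric_two' _

end engelProd

section engelSplice

variable (d : ℕ → ℕ) (n m : ℕ)

lemma engelProd_spliceDigits_of_le {k : ℕ} (hk : k ≤ n) :
    engelProd (spliceDigits d n m) k = engelProd d k :=
  prod_congr rfl fun j hj => by
    rw [sum_range_spliceDigits_of_le d (fun i => (i : ℝ)) (by rw [mem_range] at hj; omega)]

lemma engelProd_spliceDigits_add (t : ℕ) :
    engelProd (spliceDigits d n m) (n + t)
      = engelProd d n * ((2 + ∑ i ∈ range n, (d i : ℝ) + m)⁻¹) ^ t := by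
  rw [engelProd, prod_range_add, ← engelProd, engelProd_spliceDigits_of_le d n m le_rfl]
  have hdenom : ∀ j ∈ range t, (2 + ∑ i ∈ range (n + j + 1), (spliceDigits d n m i : ℝ))⁻¹
      = (2 + ∑ i ∈ range n, (d i : ℝ) + m)⁻¹ := fun j _ => by
    rw [add_right_comm, sum_range_spliceDigits_add d (fun i => (i : ℝ)), Nat.cast_zero, smul_zero,
      add_zero, add_assoc]
  rw [prod_congr rfl hdenom, prod_const, card_range]

lemma engelSum_spliceDigits :
    engelSum (spliceDigits d n m)
      = ∑ j ∈ range n, engelProd d (j + 1)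
        + engelProd d n * (1 + ∑ i ∈ range n, (d i : ℝ) + m)⁻¹ := by
  set S := ∑ i ∈ range n, (d i : ℝ)
  have hS : 0 ≤ S := sum_nonneg fun _ _ => Nat.cast_nonneg _
  set ρ := (2 + S + m)⁻¹ with hρ
  have hρ0 : 0 ≤ ρ := by rw [hρ]; positivity
  have hρ1 : ρ < 1 := inv_lt_one_of_one_lt₀ (by linarith [Nat.cast_nonneg (α := ℝ) m])
  rw [engelSum_eq_sum_add_tsum _ n]
  congr 1
  · exact sum_congr rfl fun j hj =>
      engelProd_spliceDigits_of_le d n m (by rw [mem_range] at hj; omega)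
  · have hterm : ∀ t, engelProd (spliceDigits d n m) (t + n + 1) = engelProd d n * ρ * ρ ^ t :=
      fun t => by
        rw [show t + n + 1 = n + (t + 1) by ring, engelProd_spliceDigits_add, pow_succ']; ring
    rw [tsum_congr hterm, tsum_mul_left, tsum_geometric_of_lt_one hρ0 hρ1, mul_assoc]
    congr 1
    have h2 : 2 + S + m ≠ 0 := by positivity
    rw [hρ, ← mul_inv, mul_sub, mul_one, mul_inv_cancel₀ h2]
    ring

lemma abs_engelSum_spliceDigits_sub_lt :
    |engelSum (spliceDigits d n m) - engelSum d| < (1 / 2) ^ n := by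
  have hS : (0 : ℝ) ≤ ∑ i ∈ range n, (d i : ℝ) := sum_nonneg fun _ _ => Nat.cast_nonneg _
  have hinv : (1 + ∑ i ∈ range n, (d i : ℝ) + m)⁻¹ ≤ 1 :=
    inv_le_one_of_one_le₀ (by linarith [Nat.cast_nonneg (α := ℝ) m])
  have hinv0 : 0 < (1 + ∑ i ∈ range n, (d i : ℝ) + m)⁻¹ := by positivity
  have hP := engelProd_pos d n
  have hPle := engelProd_le_half_pow d n
  have := tsum_engelProd_tail_pos d n
  have := tsum_engelProd_tail_le d n
  rw [engelSum_spliceDigits, engelSum_eq_sum_add_tsum d n, abs_sub_lt_iff]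
  constructor <;> nlinarith

lemma engelSum_spliceDigits_succ_lt :
    engelSum (spliceDigits d n (m + 1)) < engelSum (spliceDigits d n m) := by
  rw [engelSum_spliceDigits, engelSum_spliceDigits, add_lt_add_iff_left, Nat.cast_succ]
  gcongr
  · exact engelProd_pos d n
  · linarith

end engelSplice

lemma fSeries_spliceDigits (u r : ℕ → ℝ) (hr0 : r 0 = 1 - u 0) (hu0 : |u 0| < 1)
    (d : ℕ → ℕ) (n m : ℕ) :
    fSeries u r (spliceDigits d n m)
      = ∑ k ∈ range n, r (d k) * ∏ i ∈ range k, u (d i)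
        + (∏ i ∈ range n, u (d i)) * (r m + u m) := by
  set P := ∏ i ∈ range n, u (d i)
  set T : ℕ → ℝ := fun k => r (spliceDigits d n m k) * ∏ i ∈ range k, u (spliceDigits d n m i)
    with hT
  have hhead : ∀ k ∈ range n, T k = r (d k) * ∏ i ∈ range k, u (d i) := fun k hk => by
    rw [mem_range] at hk
    simp only [hT]
    rw [spliceDigits_of_lt d hk, prod_range_spliceDigits_of_le d u hk.le]
  have hmid : T n = r m * P := by
    simp only [hT]
    rw [spliceDigits_self, prod_range_spliceDigits_of_le d u le_rfl]
  have htail : ∀ t, T (t + (n + 1)) = r 0 * (P * u m) * u 0 ^ t := fun t => by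
    simp only [hT]
    rw [spliceDigits_of_gt d (by omega), add_comm t, prod_range_spliceDigits_add]
    ring
  have hT_summable : Summable T := (summable_nat_add_iff (n + 1)).mp
    (((summable_geometric_of_abs_lt_one hu0).mul_left _).congr fun t => (htail t).symm)
  have hfSeries : fSeries u r (spliceDigits d n m) = ∑' k, T k := by
    rw [hT_summable.tsum_eq_zero_add]
    simp [hT, fSeries]
  have hu0_ne : 1 - u 0 ≠ 0 := by linarith [(abs_lt.mp hu0).2]
  rw [hfSeries, ← hT_summable.sum_add_tsum_nat_add (n + 1), tsum_congr htail, tsum_mul_left,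
    tsum_geometric_of_abs_lt_one hu0, sum_range_succ, sum_congr rfl hhead, hmid, hr0]
  field_simp
  ring

lemma not_monotoneOn_or_antitoneOn_of_step_mul_neg {α : Type*} [Preorder α] {f : α → ℝ}
    {s : Set α} {x : ℕ → α} (hxs : ∀ m, x m ∈ s) (hx : ∀ m, x (m + 1) ≤ x m) {i j : ℕ}
    (h : (f (x i) - f (x (i + 1))) * (f (x j) - f (x (j + 1))) < 0) :
    ¬ (MonotoneOn f s ∨ AntitoneOn f s) := by
  rintro (hf | hf)
  · have hi := hf (hxs (i + 1)) (hxs i) (hx i)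
    have hj := hf (hxs (j + 1)) (hxs j) (hx j)
    nlinarith
  · have hi := hf (hxs (i + 1)) (hxs i) (hx i)
    have hj := hf (hxs (j + 1)) (hxs j) (hx j)
    nlinarith

theorem stmt15_general
    (u r : ℕ → ℝ)
    (hr : ∀ n, r n = 1 - ∑ i ∈ Finset.range (n + 1), u i)
    (hr01 : ∀ n, 0 < r n ∧ r n < 1)
    (G : ℝ → ℕ → ℕ)
    (hG : ∀ x ∈ Set.Ioc (0:ℝ) 1, engelSum (G x) = x)
    (hGuniq : ∀ x ∈ Set.Ioc (0:ℝ) 1, ∀ g : ℕ → ℕ, engelSum g = x → g = G x)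
    (f : ℝ → ℝ)
    (hf : ∀ x ∈ Set.Ioc (0:ℝ) 1, f x = fSeries u r (G x))
    (hu0 : ∀ n, u n ≠ 0) (hneg : ∃ n, u n < 0) :
    ∀ a b : ℝ, 0 ≤ a → a < b → b ≤ 1 →
      ¬ (MonotoneOn f (Set.Ioo a b) ∨ AntitoneOn f (Set.Ioo a b)) := by
  intro a b ha hab hb
  obtain ⟨N, hN⟩ := hneg
  have hr0 : r 0 = 1 - u 0 := by simpa using hr 0
  have hu0_pos : 0 < u 0 := by linarith [(hr01 0).2]
  have hu0_abs : |u 0| < 1 := abs_lt.mpr ⟨by linarith, by linarith [(hr01 0).1]⟩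
  have hr_succ : ∀ m, r (m + 1) = r m - u (m + 1) := fun m => by
    rw [hr, hr, sum_range_succ _ (m + 1)]; ring
  obtain ⟨n, hn⟩ := exists_pow_lt_of_lt_one (by linarith : 0 < (b - a) / 2)
    (by norm_num : (1 / 2 : ℝ) < 1)
  set d := G ((a + b) / 2)
  have hd : engelSum d = (a + b) / 2 := hG _ ⟨by linarith, by linarith⟩
  set x : ℕ → ℝ := fun m => engelSum (spliceDigits d n m)
  have hx_mem : ∀ m, x m ∈ Set.Ioo a b := fun m => by
    have := abs_engelSum_spliceDigits_sub_lt d n m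
    rw [hd, abs_sub_lt_iff] at this
    constructor <;> linarith
  have hfx : ∀ m, f (x m) = fSeries u r (spliceDigits d n m) := fun m => by
    have hx : x m ∈ Set.Ioc 0 1 := ⟨by linarith [(hx_mem m).1], by linarith [(hx_mem m).2]⟩
    rw [hf _ hx, ← hGuniq _ hx _ rfl]
  have hstep : ∀ m, f (x m) - f (x (m + 1)) = (∏ i ∈ range n, u (d i)) * u m := fun m => by
    rw [hfx, hfx, fSeries_spliceDigits u r hr0 hu0_abs, fSeries_spliceDigits u r hr0 hu0_abs,
      hr_succ]
    ring
  have hP : ∏ i ∈ range n, u (d i) ≠ 0 := prod_ne_zero_iff.mpr fun i _ => hu0 (d i)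
  refine not_monotoneOn_or_antitoneOn_of_step_mul_neg hx_mem
    (fun m => (engelSum_spliceDigits_succ_lt d n m).le) (i := 0) (j := N) ?_
  rw [hstep, hstep, mul_mul_mul_comm]
  exact mul_neg_of_pos_of_neg (mul_self_pos.mpr hP) (mul_neg_of_pos_of_neg hu0_pos hN)

/-- if no u_n vanishes but some u_n < 0, then f is monotone on
no non-degenerate subinterval of [0,1]. -/
theorem stmt15
    (u r : ℕ → ℝ)
    (hu_sum : HasSum u 1)
    (hu_abs : ∀ n, |u n| < 1)
    (hr : ∀ n, r n = 1 - ∑ i ∈ Finset.range (n + 1), u i)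
    (hr01 : ∀ n, 0 < r n ∧ r n < 1)
    (G : ℝ → ℕ → ℕ)
    (hG : ∀ x ∈ Set.Ioc (0:ℝ) 1, engelSum (G x) = x)
    (hGuniq : ∀ x ∈ Set.Ioc (0:ℝ) 1, ∀ g : ℕ → ℕ, engelSum g = x → g = G x)
    (f : ℝ → ℝ)
    (hf : ∀ x ∈ Set.Ioc (0:ℝ) 1, f x = fSeries u r (G x))
    (hf0 : f 0 = 0)
    (hu0 : ∀ n, u n ≠ 0) (hneg : ∃ n, u n < 0) :
    ∀ a b : ℝ, 0 ≤ a → a < b → b ≤ 1 →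
      ¬ (MonotoneOn f (Set.Ioo a b) ∨ AntitoneOn f (Set.Ioo a b)) :=
  stmt15_general u r hr hr01 G hG hGuniq f hf hu0 hneg
end

section
/- Let c_1,…,c_m, i be non-negative integers and x_0 := Δ^E_{c_1…c_m i(0)} the E-rational point with digits c_1,…,c_m,i followed by the all-zero tail. (1) If u_{i−1}·u_i < 0 (with u_{−1} interpreted via r_{−1} = 1, i.e., i ≥ 1) and D_m := ∏_{j=1}^m u_{c_j} ≠ 0, then x_0 is a local extremum point of f: a local maximum if D_m·u_i > 0 and a local minimum if D_m·u_i < 0. (2) If u_{i−1}·u_i ≥ 0, then x_0 is not a local extremum point of f. -/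
open scoped BigOperators

/-- A strict local maximum point: f t < f x₀ in a punctured neighbourhood. -/
def IsStrictLocalMaxPt (f : ℝ → ℝ) (x₀ : ℝ) : Prop :=
  ∀ᶠ t in nhdsWithin x₀ {x₀}ᶜ, f t < f x₀

/-- A strict local minimum point: f x₀ < f t in a punctured neighbourhood. -/
def IsStrictLocalMinPt (f : ℝ → ℝ) (x₀ : ℝ) : Prop :=
  ∀ᶠ t in nhdsWithin x₀ {x₀}ᶜ, f x₀ < f t

/-!
Near `x₀` the E-digits of `x` begin with `c₁ … c_m` followed by `i` when `x < x₀` and by `i - 1`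
when `x > x₀`: the points whose digits begin with `c₁ … c_m a` form the interval
`(Δ^E_{c₁…c_m (a+1)(0)}, Δ^E_{c₁…c_m a(0)}]`. Writing `F` for the series defining `f` on digit
sequences, `F(c₁ … c_m a w) = C + D_m (r_a + u_a F(w))` with `F(w) ∈ (0, 1]`, and `F(w) = 1` only
for `w = (0)`. Since `r_i + u_i = r_{i-1}`, the increment `f x - f x₀` is `D_m u_{i-1} F(w)` on the
right of `x₀` and `-D_m u_i (1 - F(w))` on the left, so the signs of `D_m u_{i-1}` and `D_m u_i`
decide whether `x₀` is an extremum.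
-/

open Finset Filter Topology

def consSeq (a : ℕ) (g : ℕ → ℕ) : ℕ → ℕ
  | 0 => a
  | n + 1 => g n

-- `engelSum` only sees the partial sums of the digits, so after a leading digit `a` is split off,
-- the remaining digits are read with `a` added to the first of them.
def addHead (a : ℕ) (g : ℕ → ℕ) : ℕ → ℕ
  | 0 => g 0 + a
  | n + 1 => g (n + 1)

def prefixSeq (m : ℕ) (c t : ℕ → ℕ) : ℕ → ℕ := fun n => if n < m then c n else t (n - m)

@[simp] lemma consSeq_zero (a : ℕ) (g : ℕ → ℕ) : consSeq a g 0 = a := rfl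

@[simp] lemma consSeq_succ (a : ℕ) (g : ℕ → ℕ) (n : ℕ) : consSeq a g (n + 1) = g n := rfl

lemma consSeq_head_tail (g : ℕ → ℕ) : consSeq (g 0) (fun n => g (n + 1)) = g := by
  funext n; cases n <;> rfl

lemma addHead_zero (g : ℕ → ℕ) : addHead 0 g = g := by
  funext n; cases n <;> rfl

lemma addHead_consSeq (a b : ℕ) (g : ℕ → ℕ) : addHead a (consSeq b g) = consSeq (b + a) g := by
  funext n; cases n <;> rfl

lemma prefixSeq_zero (c t : ℕ → ℕ) : prefixSeq 0 c t = t := by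
  funext n; simp [prefixSeq]

lemma prefixSeq_succ (m : ℕ) (c t : ℕ → ℕ) :
    prefixSeq (m + 1) c t = prefixSeq m c (consSeq (c m) t) := by
  funext n
  simp only [prefixSeq]
  rcases lt_trichotomy n m with h | rfl | h
  · rw [if_pos h, if_pos (by omega)]
  · simp
  · rw [if_neg (by omega), if_neg (by omega), show n - m = n - (m + 1) + 1 by omega]
    rfl

noncomputable def engelTerm (g : ℕ → ℕ) (n : ℕ) : ℝ :=
  ∏ k ∈ range (n + 1), ((2 : ℝ) + ∑ i ∈ range (k + 1), (g i : ℝ))⁻¹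

lemma engelSum_eq_tsum_engelTerm (g : ℕ → ℕ) : engelSum g = ∑' n, engelTerm g n := rfl

lemma engelTerm_pos (g : ℕ → ℕ) (n : ℕ) : 0 < engelTerm g n :=
  prod_pos fun _ _ => by positivity

lemma engelTerm_le_pow (g : ℕ → ℕ) (n : ℕ) :
    engelTerm g n ≤ ((2 + g 0 : ℝ)⁻¹) ^ (n + 1) := by
  rw [← card_range (n + 1), ← prod_const]
  refine prod_le_prod (fun _ _ => by positivity) fun k _ => inv_anti₀ (by positivity) ?_
  have : (g 0 : ℝ) ≤ ∑ i ∈ range (k + 1), (g i : ℝ) :=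
    single_le_sum (f := fun i => (g i : ℝ)) (fun _ _ => Nat.cast_nonneg _) (by simp)
  linarith

lemma inv_two_add_lt_one {b : ℝ} (hb : 0 ≤ b) : (2 + b)⁻¹ < 1 :=
  inv_lt_one_of_one_lt₀ (by linarith)

lemma summable_inv_two_add_pow_succ {b : ℝ} (hb : 0 ≤ b) :
    Summable fun n : ℕ => ((2 + b)⁻¹) ^ (n + 1) :=
  (summable_nat_add_iff 1).2 (summable_geometric_of_lt_one (by positivity) (inv_two_add_lt_one hb))

lemma tsum_inv_two_add_pow_succ {b : ℝ} (hb : 0 ≤ b) :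
    ∑' n : ℕ, ((2 + b)⁻¹) ^ (n + 1) = (1 + b)⁻¹ := by
  have h2 : 2 + b ≠ 0 := by positivity
  simp_rw [pow_succ']
  rw [tsum_mul_left, tsum_geometric_of_lt_one (by positivity) (inv_two_add_lt_one hb),
    show 1 - (2 + b)⁻¹ = (1 + b) / (2 + b) by field_simp; ring, inv_div]
  field_simp

lemma summable_engelTerm (g : ℕ → ℕ) : Summable (engelTerm g) :=
  .of_nonneg_of_le (fun n => (engelTerm_pos g n).le) (engelTerm_le_pow g)
    (summable_inv_two_add_pow_succ (Nat.cast_nonneg _))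

lemma engelSum_pos (g : ℕ → ℕ) : 0 < engelSum g :=
  (summable_engelTerm g).tsum_pos (fun n => (engelTerm_pos g n).le) 0 (engelTerm_pos g 0)

lemma inv_two_add_head_lt_engelSum (g : ℕ → ℕ) : (2 + g 0 : ℝ)⁻¹ < engelSum g := by
  rw [engelSum_eq_tsum_engelTerm, (summable_engelTerm g).tsum_eq_zero_add]
  have hrest : 0 < ∑' n, engelTerm g (n + 1) :=
    ((summable_nat_add_iff 1).2 (summable_engelTerm g)).tsum_pos
      (fun n => (engelTerm_pos g _).le) 0 (engelTerm_pos g 1)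
  have hhead : engelTerm g 0 = (2 + g 0 : ℝ)⁻¹ := by simp [engelTerm]
  linarith

lemma engelSum_le_inv_one_add_head (g : ℕ → ℕ) : engelSum g ≤ (1 + g 0 : ℝ)⁻¹ := by
  rw [← tsum_inv_two_add_pow_succ (Nat.cast_nonneg (g 0))]
  exact (summable_engelTerm g).tsum_le_tsum (engelTerm_le_pow g)
    (summable_inv_two_add_pow_succ (Nat.cast_nonneg _))

lemma engelSum_mem_Ioc (g : ℕ → ℕ) : engelSum g ∈ Set.Ioc (0 : ℝ) 1 :=
  ⟨engelSum_pos g, (engelSum_le_inv_one_add_head g).trans (inv_le_one_of_one_le₀ (by simp))⟩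

lemma sum_range_consSeq (a : ℕ) (g : ℕ → ℕ) (k : ℕ) :
    ∑ i ∈ range (k + 2), (consSeq a g i : ℝ) = ∑ i ∈ range (k + 1), (addHead a g i : ℝ) := by
  rw [sum_range_succ', sum_range_succ', sum_range_succ' (fun i => (addHead a g i : ℝ))]
  simp only [consSeq_succ, consSeq_zero, addHead, Nat.cast_add]
  ring

lemma engelTerm_consSeq_succ (a : ℕ) (g : ℕ → ℕ) (n : ℕ) :
    engelTerm (consSeq a g) (n + 1) = (2 + a : ℝ)⁻¹ * engelTerm (addHead a g) n := by
  simp only [engelTerm]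
  rw [prod_range_succ', mul_comm]
  simp [sum_range_consSeq]

lemma engelSum_consSeq (a : ℕ) (g : ℕ → ℕ) :
    engelSum (consSeq a g) = (2 + a : ℝ)⁻¹ * (1 + engelSum (addHead a g)) := by
  have hhead : engelTerm (consSeq a g) 0 = (2 + a : ℝ)⁻¹ := by simp [engelTerm]
  rw [engelSum_eq_tsum_engelTerm, (summable_engelTerm _).tsum_eq_zero_add, hhead]
  simp only [engelTerm_consSeq_succ, tsum_mul_left, engelSum_eq_tsum_engelTerm]
  ring

lemma engelSum_consSeq_zero (b : ℕ) : engelSum (consSeq b 0) = (1 + b : ℝ)⁻¹ := by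
  have hfix : addHead b 0 = consSeq b 0 := by
    funext n; cases n <;> simp [addHead]
  have h := engelSum_consSeq b 0
  rw [hfix] at h
  have : (1 + b : ℝ) ≠ 0 := by positivity
  field_simp
  have : (2 + b : ℝ) ≠ 0 := by positivity
  field_simp at h
  linarith

lemma exists_engelSum_prefixSeq (m : ℕ) (c : ℕ → ℕ) :
    ∃ A P : ℝ, 0 < P ∧ ∀ t,
      engelSum (prefixSeq m c t) = A + P * engelSum (addHead (∑ j ∈ range m, c j) t) := by
  induction m with
  | zero => exact ⟨0, 1, one_pos, fun t => by simp [prefixSeq_zero, addHead_zero]⟩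
  | succ m ih =>
    obtain ⟨A, P, hP, hE⟩ := ih
    set S := ∑ j ∈ range m, c j
    refine ⟨A + P * (2 + (c m + S : ℕ) : ℝ)⁻¹, P * (2 + (c m + S : ℕ) : ℝ)⁻¹, by positivity,
      fun t => ?_⟩
    rw [prefixSeq_succ, hE, addHead_consSeq, engelSum_consSeq, sum_range_succ, add_comm S]
    ring

lemma exists_engelSum_consSeq_eq (hex : ∀ y ∈ Set.Ioc (0 : ℝ) 1, ∃ g, engelSum g = y)
    {b : ℕ} {y : ℝ} (hy : y ∈ Set.Ioc (2 + b : ℝ)⁻¹ (1 + b : ℝ)⁻¹) :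
    ∃ w, engelSum (consSeq b w) = y := by
  have h2 : (0 : ℝ) < 2 + b := by positivity
  have h1 : (0 : ℝ) < 1 + b := by positivity
  set s := (2 + b) * y - 1 with hs
  have hs0 : 0 < s := by
    have := (inv_lt_iff_one_lt_mul₀' h2).1 hy.1
    linarith
  have hs1 : s ≤ (1 + b : ℝ)⁻¹ := by
    have key : (2 + b) * (1 + b : ℝ)⁻¹ = 1 + (1 + b : ℝ)⁻¹ := by field_simp; ring
    linarith [mul_le_mul_of_nonneg_left hy.2 h2.le]
  -- `y = (2 + b)⁻¹ (1 + s)`, and `s ≤ (1 + b)⁻¹` forces the first digit of `s` to be at least `b`.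
  obtain ⟨h, hh⟩ := hex s ⟨hs0, hs1.trans (inv_le_one_of_one_le₀ (by simp))⟩
  have hb : b ≤ h 0 := by
    have := (inv_two_add_head_lt_engelSum h).trans_le (hh ▸ hs1)
    have : (1 + b : ℝ) < 2 + h 0 := (inv_lt_inv₀ (by positivity) h1).1 this
    have : b < h 0 + 1 := by exact_mod_cast (by linarith : (b : ℝ) < h 0 + 1)
    omega
  refine ⟨consSeq (h 0 - b) (fun n => h (n + 1)), ?_⟩
  rw [engelSum_consSeq, addHead_consSeq, Nat.sub_add_cancel hb, consSeq_head_tail, hh, hs]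
  field_simp
  ring

lemma engelSum_prefixSeq_consSeq_succ_zero_lt (m : ℕ) (c : ℕ → ℕ) (a : ℕ) :
    engelSum (prefixSeq m c (consSeq (a + 1) 0)) < engelSum (prefixSeq m c (consSeq a 0)) := by
  obtain ⟨A, P, hP, hE⟩ := exists_engelSum_prefixSeq m c
  simp only [hE, addHead_consSeq, engelSum_consSeq_zero]
  gcongr
  linarith

lemma exists_engelSum_prefixSeq_consSeq_eq (hex : ∀ y ∈ Set.Ioc (0 : ℝ) 1, ∃ g, engelSum g = y)
    (m : ℕ) (c : ℕ → ℕ) {a : ℕ} {x : ℝ}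
    (hx : x ∈ Set.Ioc (engelSum (prefixSeq m c (consSeq (a + 1) 0)))
      (engelSum (prefixSeq m c (consSeq a 0)))) :
    ∃ w, engelSum (prefixSeq m c (consSeq a w)) = x := by
  obtain ⟨A, P, hP, hE⟩ := exists_engelSum_prefixSeq m c
  obtain ⟨b, hb⟩ : ∃ b, a + ∑ j ∈ range m, c j = b := ⟨_, rfl⟩
  simp only [hE, addHead_consSeq, engelSum_consSeq_zero, add_right_comm a 1, Nat.cast_succ,
    hb] at hx
  have hy : (x - A) / P ∈ Set.Ioc (2 + b : ℝ)⁻¹ (1 + b : ℝ)⁻¹ := by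
    rw [show (2 + b : ℝ) = 1 + (b + 1) by ring]
    exact ⟨(lt_div_iff₀ hP).2 (by linarith [hx.1]), (div_le_iff₀ hP).2 (by linarith [hx.2])⟩
  obtain ⟨w, hw⟩ := exists_engelSum_consSeq_eq hex hy
  refine ⟨w, ?_⟩
  rw [hE, addHead_consSeq, hb, hw]
  field_simp
  ring

lemma add_mul_mem_of_convex {s : Set ℝ} (hs : Convex ℝ s) {x y t : ℝ} (hx : x ∈ s)
    (hxy : x + y ∈ s) (ht : t ∈ Set.Icc (0 : ℝ) 1) : x + y * t ∈ s := by
  simpa [mul_comm] using hs.add_smul_sub_mem hx hxy ht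

lemma rpred_zero (r : ℕ → ℝ) : rpred r 0 = 1 := rfl

lemma rpred_succ (r : ℕ → ℝ) (a : ℕ) : rpred r (a + 1) = r a := rfl

lemma add_eq_rpred {u r : ℕ → ℝ} (hr : ∀ n, r n = 1 - ∑ i ∈ range (n + 1), u i) (a : ℕ) :
    r a + u a = rpred r a := by
  cases a with
  | zero => simp [rpred_zero, hr 0]
  | succ b =>
    rw [rpred_succ, hr, hr, sum_range_succ _ (b + 1)]
    ring

lemma rpred_mem_Ioc {r : ℕ → ℝ} (hr01 : ∀ n, 0 < r n ∧ r n < 1) (a : ℕ) :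
    rpred r a ∈ Set.Ioc (0 : ℝ) 1 := by
  cases a with
  | zero => simp [rpred_zero]
  | succ b => exact ⟨(hr01 b).1, (hr01 b).2.le⟩

section fTsum

variable {u r : ℕ → ℝ} {q : ℝ}

noncomputable def fTsum (u r : ℕ → ℝ) (g : ℕ → ℕ) : ℝ :=
  ∑' k, r (g k) * ∏ j ∈ range k, u (g j)

lemma abs_fTerm_le (hq : ∀ n, |u n| ≤ q) (hr01 : ∀ n, 0 < r n ∧ r n < 1) (g : ℕ → ℕ) (k : ℕ) :
    |r (g k) * ∏ j ∈ range k, u (g j)| ≤ q ^ k := by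
  rw [abs_mul, abs_prod]
  calc |r (g k)| * ∏ j ∈ range k, |u (g j)| ≤ 1 * ∏ _j ∈ range k, q :=
        mul_le_mul (abs_le.2 ⟨by linarith [hr01 (g k)], (hr01 (g k)).2.le⟩)
          (prod_le_prod (fun _ _ => abs_nonneg _) fun _ _ => hq _)
          (prod_nonneg fun _ _ => abs_nonneg _) zero_le_one
    _ = q ^ k := by simp

lemma summable_fTerm (hq : ∀ n, |u n| ≤ q) (hq1 : q < 1) (hr01 : ∀ n, 0 < r n ∧ r n < 1)
    (g : ℕ → ℕ) : Summable fun k => r (g k) * ∏ j ∈ range k, u (g j) :=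
  .of_norm_bounded (summable_geometric_of_lt_one ((abs_nonneg _).trans (hq 0)) hq1)
    fun k => (Real.norm_eq_abs _).trans_le (abs_fTerm_le hq hr01 g k)

lemma fSeries_eq_fTsum (hq : ∀ n, |u n| ≤ q) (hq1 : q < 1) (hr01 : ∀ n, 0 < r n ∧ r n < 1)
    (g : ℕ → ℕ) : fSeries u r g = fTsum u r g := by
  rw [fTsum, (summable_fTerm hq hq1 hr01 g).tsum_eq_zero_add]
  simp [fSeries]

lemma abs_fTsum_le (hq : ∀ n, |u n| ≤ q) (hq1 : q < 1) (hr01 : ∀ n, 0 < r n ∧ r n < 1)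
    (g : ℕ → ℕ) : |fTsum u r g| ≤ (1 - q)⁻¹ := by
  rw [← tsum_geometric_of_lt_one ((abs_nonneg _).trans (hq 0)) hq1]
  exact tsum_of_norm_bounded (summable_geometric_of_lt_one ((abs_nonneg _).trans (hq 0)) hq1).hasSum
    fun k => (Real.norm_eq_abs _).trans_le (abs_fTerm_le hq hr01 g k)

lemma fTsum_consSeq (hq : ∀ n, |u n| ≤ q) (hq1 : q < 1) (hr01 : ∀ n, 0 < r n ∧ r n < 1)
    (a : ℕ) (g : ℕ → ℕ) : fTsum u r (consSeq a g) = r a + u a * fTsum u r g := by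
  rw [fTsum, (summable_fTerm hq hq1 hr01 _).tsum_eq_zero_add, fTsum, ← tsum_mul_left]
  simp only [prod_range_succ', consSeq_succ, consSeq_zero, range_zero, prod_empty, mul_one]
  congr 1
  exact tsum_congr fun k => by ring

lemma fTsum_eq_head_tail (hq : ∀ n, |u n| ≤ q) (hq1 : q < 1) (hr01 : ∀ n, 0 < r n ∧ r n < 1)
    (g : ℕ → ℕ) : fTsum u r g = r (g 0) + u (g 0) * fTsum u r (fun n => g (n + 1)) := by
  conv_lhs => rw [← consSeq_head_tail g]
  exact fTsum_consSeq hq hq1 hr01 _ _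

lemma exists_fTsum_prefixSeq (hq : ∀ n, |u n| ≤ q) (hq1 : q < 1)
    (hr01 : ∀ n, 0 < r n ∧ r n < 1) (m : ℕ) (c : ℕ → ℕ) :
    ∃ C, ∀ t, fTsum u r (prefixSeq m c t) = C + (∏ j ∈ range m, u (c j)) * fTsum u r t := by
  induction m with
  | zero => exact ⟨0, fun t => by simp [prefixSeq_zero]⟩
  | succ m ih =>
    obtain ⟨C, hC⟩ := ih
    refine ⟨C + (∏ j ∈ range m, u (c j)) * r (c m), fun t => ?_⟩
    rw [prefixSeq_succ, hC, fTsum_consSeq hq hq1 hr01, prod_range_succ]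
    ring

-- `fTrunc u r N g = fTsum u r g'`, where `g'` keeps the first `N` digits of `g` and then is zero.
noncomputable def fTrunc (u r : ℕ → ℝ) : ℕ → (ℕ → ℕ) → ℝ
  | 0, _ => 1
  | N + 1, g => r (g 0) + u (g 0) * fTrunc u r N (fun n => g (n + 1))

lemma fTrunc_mem_Ioc (hr : ∀ n, r n = 1 - ∑ i ∈ range (n + 1), u i)
    (hr01 : ∀ n, 0 < r n ∧ r n < 1) (N : ℕ) (g : ℕ → ℕ) : fTrunc u r N g ∈ Set.Ioc (0 : ℝ) 1 := by
  induction N generalizing g with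
  | zero => simp [fTrunc]
  | succ N ih =>
    exact add_mul_mem_of_convex (convex_Ioc 0 1) ⟨(hr01 _).1, (hr01 _).2.le⟩
      (add_eq_rpred hr _ ▸ rpred_mem_Ioc hr01 _) (Set.Ioc_subset_Icc_self (ih _))

lemma abs_fTsum_sub_fTrunc_le (hq : ∀ n, |u n| ≤ q) (hq1 : q < 1)
    (hr01 : ∀ n, 0 < r n ∧ r n < 1) (N : ℕ) (g : ℕ → ℕ) :
    |fTsum u r g - fTrunc u r N g| ≤ ((1 - q)⁻¹ + 1) * q ^ N := by
  induction N generalizing g with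
  | zero =>
    simpa [fTrunc] using (abs_sub _ _).trans (by simpa using abs_fTsum_le hq hq1 hr01 g)
  | succ N ih =>
    rw [fTsum_eq_head_tail hq hq1 hr01, fTrunc, add_sub_add_left_eq_sub, ← mul_sub, abs_mul,
      pow_succ', mul_left_comm]
    exact mul_le_mul (hq _) (ih _) (abs_nonneg _) ((abs_nonneg _).trans (hq 0))

lemma tendsto_fTrunc (hq : ∀ n, |u n| ≤ q) (hq1 : q < 1) (hr01 : ∀ n, 0 < r n ∧ r n < 1)
    (g : ℕ → ℕ) : Tendsto (fun N => fTrunc u r N g) atTop (𝓝 (fTsum u r g)) := by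
  have hbound : Tendsto (fun N : ℕ => ((1 - q)⁻¹ + 1) * q ^ N) atTop (𝓝 0) := by
    simpa using (tendsto_pow_atTop_nhds_zero_of_lt_one ((abs_nonneg _).trans (hq 0)) hq1).const_mul
      ((1 - q)⁻¹ + 1)
  rw [tendsto_iff_norm_sub_tendsto_zero]
  refine squeeze_zero (fun _ => norm_nonneg _) (fun N => ?_) hbound
  rw [Real.norm_eq_abs, abs_sub_comm]
  exact abs_fTsum_sub_fTrunc_le hq hq1 hr01 N g

lemma fTsum_mem_Icc (hq : ∀ n, |u n| ≤ q) (hq1 : q < 1)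
    (hr : ∀ n, r n = 1 - ∑ i ∈ range (n + 1), u i) (hr01 : ∀ n, 0 < r n ∧ r n < 1)
    (g : ℕ → ℕ) : fTsum u r g ∈ Set.Icc (0 : ℝ) 1 :=
  isClosed_Icc.mem_of_tendsto (tendsto_fTrunc hq hq1 hr01 g)
    (Eventually.of_forall fun N => Set.Ioc_subset_Icc_self (fTrunc_mem_Ioc hr hr01 N g))

lemma fTsum_mem_Ioc (hq : ∀ n, |u n| ≤ q) (hq1 : q < 1)
    (hr : ∀ n, r n = 1 - ∑ i ∈ range (n + 1), u i) (hr01 : ∀ n, 0 < r n ∧ r n < 1)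
    (g : ℕ → ℕ) : fTsum u r g ∈ Set.Ioc (0 : ℝ) 1 := by
  rw [fTsum_eq_head_tail hq hq1 hr01]
  exact add_mul_mem_of_convex (convex_Ioc 0 1) ⟨(hr01 _).1, (hr01 _).2.le⟩
    (add_eq_rpred hr _ ▸ rpred_mem_Ioc hr01 _) (fTsum_mem_Icc hq hq1 hr hr01 _)

lemma fTsum_zero (hq : ∀ n, |u n| ≤ q) (hq1 : q < 1)
    (hr : ∀ n, r n = 1 - ∑ i ∈ range (n + 1), u i) (hr01 : ∀ n, 0 < r n ∧ r n < 1) :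
    fTsum u r 0 = 1 := by
  have hcons : consSeq 0 0 = (0 : ℕ → ℕ) := by funext n; cases n <;> rfl
  have h := fTsum_consSeq hq hq1 hr01 0 0
  have h0 := add_eq_rpred hr 0
  rw [hcons] at h
  rw [rpred_zero] at h0
  have : r 0 * (1 - fTsum u r 0) = 0 := by linear_combination -h - fTsum u r 0 * h0
  rcases mul_eq_zero.1 this with h' | h'
  · exact absurd h' (hr01 0).1.ne'
  · linarith

lemma fTsum_lt_one (hq : ∀ n, |u n| ≤ q) (hq1 : q < 1)
    (hr : ∀ n, r n = 1 - ∑ i ∈ range (n + 1), u i) (hr01 : ∀ n, 0 < r n ∧ r n < 1)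
    (k : ℕ) (g : ℕ → ℕ) (hk : g k ≠ 0) : fTsum u r g < 1 := by
  rw [fTsum_eq_head_tail hq hq1 hr01]
  by_cases h0 : g 0 = 0
  · have hk0 : k ≠ 0 := by rintro rfl; exact hk h0
    obtain ⟨k, rfl⟩ := Nat.exists_eq_add_one.2 (Nat.pos_of_ne_zero hk0)
    have htail := fTsum_lt_one hq hq1 hr hr01 k (fun n => g (n + 1)) hk
    have h1 := add_eq_rpred hr 0
    rw [rpred_zero] at h1
    rw [h0]
    nlinarith [(hr01 0).2]
  · have hpred : r (g 0) + u (g 0) < 1 := by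
      obtain ⟨b, hb⟩ := Nat.exists_eq_add_one.2 (Nat.pos_of_ne_zero h0)
      rw [add_eq_rpred hr, hb, rpred_succ]
      exact (hr01 b).2
    exact add_mul_mem_of_convex (convex_Iio 1) (hr01 _).2 hpred (fTsum_mem_Icc hq hq1 hr hr01 _)
termination_by k

end fTsum

lemma exists_abs_le_lt_one_of_tendsto_zero {u : ℕ → ℝ} (hu : Tendsto u atTop (𝓝 0))
    (hu1 : ∀ n, |u n| < 1) : ∃ q < 1, ∀ n, |u n| ≤ q := by
  obtain ⟨N, hN⟩ := Metric.tendsto_atTop.1 hu (1 / 2) (by norm_num)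
  refine ⟨max (1 / 2) ((range (N + 1)).sup' nonempty_range_add_one fun n => |u n|),
    max_lt (by norm_num) ((sup'_lt_iff _).2 fun n _ => hu1 n), fun n => ?_⟩
  rcases le_or_gt N n with h | h
  · exact le_max_of_le_left (by simpa using (hN n h).le)
  · exact le_max_of_le_right (le_sup' (fun n => |u n|) (mem_range.2 (by omega)))

section SignPattern

variable {X : Type*} {l : Filter X} [l.NeBot] {φ : X → ℝ} {y α : ℝ}

lemma eventually_lt_iff_of_sub_eq_mul_pos (h : ∀ᶠ x in l, ∃ F > 0, φ x - y = α * F) :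
    (∀ᶠ x in l, φ x < y) ↔ α < 0 := by
  refine ⟨fun hlt => ?_, fun hα => ?_⟩
  · obtain ⟨x, hx, F, hF, hxF⟩ := (hlt.and h).exists
    nlinarith
  · filter_upwards [h] with x ⟨F, hF, hxF⟩
    nlinarith

lemma eventually_gt_iff_of_sub_eq_mul_pos (h : ∀ᶠ x in l, ∃ F > 0, φ x - y = α * F) :
    (∀ᶠ x in l, y < φ x) ↔ 0 < α := by
  refine ⟨fun hgt => ?_, fun hα => ?_⟩
  · obtain ⟨x, hx, F, hF, hxF⟩ := (hgt.and h).exists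
    nlinarith
  · filter_upwards [h] with x ⟨F, hF, hxF⟩
    nlinarith

end SignPattern

lemma isStrictLocalMaxPt_iff {f : ℝ → ℝ} {x₀ : ℝ} :
    IsStrictLocalMaxPt f x₀ ↔ (∀ᶠ t in 𝓝[<] x₀, f t < f x₀) ∧ ∀ᶠ t in 𝓝[>] x₀, f t < f x₀ := by
  rw [IsStrictLocalMaxPt, ← nhdsLT_sup_nhdsGT, eventually_sup]

lemma isStrictLocalMinPt_iff {f : ℝ → ℝ} {x₀ : ℝ} :
    IsStrictLocalMinPt f x₀ ↔ (∀ᶠ t in 𝓝[<] x₀, f x₀ < f t) ∧ ∀ᶠ t in 𝓝[>] x₀, f x₀ < f t := by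
  rw [IsStrictLocalMinPt, ← nhdsLT_sup_nhdsGT, eventually_sup]

section LocalBehaviour

variable {u r : ℕ → ℝ} {q : ℝ} {f : ℝ → ℝ}

lemma eventually_nhdsGT_sub_eq_mul (hq : ∀ n, |u n| ≤ q) (hq1 : q < 1)
    (hr : ∀ n, r n = 1 - ∑ i ∈ range (n + 1), u i) (hr01 : ∀ n, 0 < r n ∧ r n < 1)
    (hex : ∀ y ∈ Set.Ioc (0 : ℝ) 1, ∃ g, engelSum g = y)
    (hfE : ∀ d, f (engelSum d) = fTsum u r d) (m : ℕ) (c : ℕ → ℕ) (a : ℕ) :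
    ∀ᶠ x in 𝓝[>] engelSum (prefixSeq m c (consSeq (a + 1) 0)), ∃ F > 0,
      f x - f (engelSum (prefixSeq m c (consSeq (a + 1) 0))) =
        ((∏ j ∈ range m, u (c j)) * u a) * F := by
  obtain ⟨C, hC⟩ := exists_fTsum_prefixSeq hq hq1 hr01 m c
  filter_upwards [Ioo_mem_nhdsGT (engelSum_prefixSeq_consSeq_succ_zero_lt m c a)] with x hx
  obtain ⟨w, rfl⟩ := exists_engelSum_prefixSeq_consSeq_eq hex m c ⟨hx.1, hx.2.le⟩
  refine ⟨fTsum u r w, (fTsum_mem_Ioc hq hq1 hr hr01 w).1, ?_⟩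
  have hstep : r (a + 1) + u (a + 1) = r a := by rw [add_eq_rpred hr, rpred_succ]
  rw [hfE, hfE, hC, hC, fTsum_consSeq hq hq1 hr01, fTsum_consSeq hq hq1 hr01,
    fTsum_zero hq hq1 hr hr01]
  linear_combination (-(∏ j ∈ range m, u (c j))) * hstep

lemma eventually_nhdsLT_sub_eq_mul (hq : ∀ n, |u n| ≤ q) (hq1 : q < 1)
    (hr : ∀ n, r n = 1 - ∑ i ∈ range (n + 1), u i) (hr01 : ∀ n, 0 < r n ∧ r n < 1)
    (hex : ∀ y ∈ Set.Ioc (0 : ℝ) 1, ∃ g, engelSum g = y)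
    (hfE : ∀ d, f (engelSum d) = fTsum u r d) (m : ℕ) (c : ℕ → ℕ) (a : ℕ) :
    ∀ᶠ x in 𝓝[<] engelSum (prefixSeq m c (consSeq a 0)), ∃ F > 0,
      f x - f (engelSum (prefixSeq m c (consSeq a 0))) =
        -((∏ j ∈ range m, u (c j)) * u a) * F := by
  obtain ⟨C, hC⟩ := exists_fTsum_prefixSeq hq hq1 hr01 m c
  filter_upwards [Ioo_mem_nhdsLT (engelSum_prefixSeq_consSeq_succ_zero_lt m c a)] with x hx
  obtain ⟨w, rfl⟩ := exists_engelSum_prefixSeq_consSeq_eq hex m c ⟨hx.1, hx.2.le⟩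
  obtain ⟨k, hk⟩ : ∃ k, w k ≠ 0 := Function.ne_iff.1 (by rintro rfl; exact hx.2.false)
  refine ⟨1 - fTsum u r w, sub_pos.2 (fTsum_lt_one hq hq1 hr hr01 k w hk), ?_⟩
  rw [hfE, hfE, hC, hC, fTsum_consSeq hq hq1 hr01, fTsum_consSeq hq hq1 hr01,
    fTsum_zero hq hq1 hr hr01]
  ring

end LocalBehaviour

lemma ite_digits_eq_prefixSeq (m : ℕ) (c : ℕ → ℕ) (i : ℕ) :
    (fun n => if n < m then c n else if n = m then i else 0) = prefixSeq m c (consSeq i 0) := by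
  funext n
  simp only [prefixSeq]
  split_ifs with h₁ h₂
  · rfl
  · simp [h₂]
  · obtain ⟨k, hk⟩ : ∃ k, n - m = k + 1 := ⟨n - m - 1, by omega⟩
    simp [hk]

theorem stmt16_general
    (u r : ℕ → ℝ)
    (hu_sum : HasSum u 1)
    (hu_abs : ∀ n, |u n| < 1)
    (hr : ∀ n, r n = 1 - ∑ i ∈ Finset.range (n + 1), u i)
    (hr01 : ∀ n, 0 < r n ∧ r n < 1)
    (G : ℝ → ℕ → ℕ)
    (hG : ∀ x ∈ Set.Ioc (0:ℝ) 1, engelSum (G x) = x)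
    (hGuniq : ∀ x ∈ Set.Ioc (0:ℝ) 1, ∀ g : ℕ → ℕ, engelSum g = x → g = G x)
    (f : ℝ → ℝ)
    (hf : ∀ x ∈ Set.Ioc (0:ℝ) 1, f x = fSeries u r (G x))
    (m : ℕ) (c : ℕ → ℕ) (i : ℕ) (hi : 1 ≤ i)
    (x₀ : ℝ) (hx₀ : x₀ = engelSum
      (fun n => if n < m then c n else if n = m then i else 0)) :
    (u (i - 1) * u i < 0 → (∏ j ∈ Finset.range m, u (c j)) ≠ 0 →
      (0 < (∏ j ∈ Finset.range m, u (c j)) * u i → IsStrictLocalMaxPt f x₀) ∧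
      ((∏ j ∈ Finset.range m, u (c j)) * u i < 0 → IsStrictLocalMinPt f x₀)) ∧
    (0 ≤ u (i - 1) * u i →
      ¬ (IsStrictLocalMaxPt f x₀ ∨ IsStrictLocalMinPt f x₀)) := by
  obtain ⟨q, hq1, hq⟩ :=
    exists_abs_le_lt_one_of_tendsto_zero hu_sum.summable.tendsto_atTop_zero hu_abs
  have hex : ∀ y ∈ Set.Ioc (0 : ℝ) 1, ∃ g, engelSum g = y := fun y hy => ⟨G y, hG y hy⟩
  have hfE : ∀ d, f (engelSum d) = fTsum u r d := fun d => by
    rw [hf _ (engelSum_mem_Ioc d), ← hGuniq _ (engelSum_mem_Ioc d) d rfl,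
      fSeries_eq_fTsum hq hq1 hr01]
  obtain ⟨a, rfl⟩ : ∃ a, i = a + 1 := ⟨i - 1, by omega⟩
  rw [ite_digits_eq_prefixSeq] at hx₀
  subst hx₀
  have hR := eventually_nhdsGT_sub_eq_mul hq hq1 hr hr01 hex hfE m c a
  have hL := eventually_nhdsLT_sub_eq_mul hq hq1 hr hr01 hex hfE m c (a + 1)
  rw [Nat.add_sub_cancel, isStrictLocalMaxPt_iff, isStrictLocalMinPt_iff,
    eventually_lt_iff_of_sub_eq_mul_pos hL, eventually_lt_iff_of_sub_eq_mul_pos hR,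
    eventually_gt_iff_of_sub_eq_mul_pos hL, eventually_gt_iff_of_sub_eq_mul_pos hR]
  set D := ∏ j ∈ Finset.range m, u (c j)
  refine ⟨fun h hD => ⟨fun hDu => ⟨by linarith, ?_⟩, fun hDu => ⟨by linarith, ?_⟩⟩, ?_⟩
  · nlinarith [sq_pos_of_ne_zero hD]
  · nlinarith [sq_pos_of_ne_zero hD]
  · rintro h (⟨h₁, h₂⟩ | ⟨h₁, h₂⟩) <;> nlinarith [mul_nonneg (sq_nonneg D) h]

/-- extremality of f at the E-rational point x₀ = Δ^E_{c₁…c_m i(0)}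
(i ≥ 1): if u_{i-1}·u_i < 0 and D_m = ∏ u_{c_j} ≠ 0 then x₀ is a maximum point when
D_m·u_i > 0 and a minimum point when D_m·u_i < 0; if u_{i-1}·u_i ≥ 0 then x₀ is not
an extremum point. -/
theorem stmt16
    (u r : ℕ → ℝ)
    (hu_sum : HasSum u 1)
    (hu_abs : ∀ n, |u n| < 1)
    (hr : ∀ n, r n = 1 - ∑ i ∈ Finset.range (n + 1), u i)
    (hr01 : ∀ n, 0 < r n ∧ r n < 1)
    (G : ℝ → ℕ → ℕ)
    (hG : ∀ x ∈ Set.Ioc (0:ℝ) 1, engelSum (G x) = x)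
    (hGuniq : ∀ x ∈ Set.Ioc (0:ℝ) 1, ∀ g : ℕ → ℕ, engelSum g = x → g = G x)
    (f : ℝ → ℝ)
    (hf : ∀ x ∈ Set.Ioc (0:ℝ) 1, f x = fSeries u r (G x))
    (hf0 : f 0 = 0)
    (m : ℕ) (c : ℕ → ℕ) (i : ℕ) (hi : 1 ≤ i)
    (x₀ : ℝ) (hx₀ : x₀ = engelSum
      (fun n => if n < m then c n else if n = m then i else 0)) :
    (u (i - 1) * u i < 0 → (∏ j ∈ Finset.range m, u (c j)) ≠ 0 →
      (0 < (∏ j ∈ Finset.range m, u (c j)) * u i → IsStrictLocalMaxPt f x₀) ∧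
      ((∏ j ∈ Finset.range m, u (c j)) * u i < 0 → IsStrictLocalMinPt f x₀)) ∧
    (0 ≤ u (i - 1) * u i →
      ¬ (IsStrictLocalMaxPt f x₀ ∨ IsStrictLocalMinPt f x₀)) :=
  stmt16_general u r hu_sum hu_abs hr hr01 G hG hGuniq f hf m c i hi x₀ hx₀
end
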